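/- arXiv:0708.0170 — 2 statements merged into one kernel-verified Lean document; each statement's English description precedes it below -/
import Mathlib

section
/- Model Minkowski spacetime as ℝ⁴ with quadratic form Q(v) = −v₀² + v₁² + v₂² + v₃². Let 0 < v < 1 and c > 0, and consider the clocks γ(t) = (t, 0, 0, 0) and γ̃(s) = (s, v·s + c, 0, 0). Then: (i) for every s ∈ ℝ with v·s + c ≠ 0, the set {t ∈ ℝ : Q(γ(t) − γ̃(s)) = 0} equals {s − |v·s + c|, s + |v·s + c|}, whose midpoint is s, so γ̃ is Einstein synchroneous to γ; (ii) for every t ∈ ℝ, the set {s ∈ ℝ : Q(γ̃(s) − γ(t)) = 0} equals {(t − c)/(1 + v), (t + c)/(1 − v)}, whose midpoint is (t + v·c)/(1 − v²), which differs from t for t = 0. Hence γ is not Einstein synchroneous to γ̃: the relation of being Einstein synchroneous is not symmetric. -/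
/-!
A light ray joins the events `(a, b, 0, 0)` and `(a', b', 0, 0)` exactly when `a - a' = ±(b - b')`.
Seen from `γ`, the spatial distance `v s + c` to `γ̃(s)` does not depend on the parameter `t`, so the
two roots `s ∓ |v s + c|` are symmetric about `s`. Seen from `γ̃`, the distance to `γ(t)` grows with
the parameter, and the two roots `(t - c)/(1 + v)` and `(t + c)/(1 - v)` are Doppler-skewed: their
midpoint at `t = 0` is `v c / (1 - v²) ≠ 0`.
-/

noncomputable def minkQ (v : Fin 4 → ℝ) : ℝ :=
  -(v 0) ^ 2 + (v 1) ^ 2 + (v 2) ^ 2 + (v 3) ^ 2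

theorem minkQ_sub_eq_zero_iff (a b a' b' : ℝ) :
    minkQ (![a, b, 0, 0] - ![a', b', 0, 0]) = 0 ↔ (a - a') ^ 2 = (b - b') ^ 2 := by
  simp [minkQ, neg_add_eq_zero, eq_comm]

theorem setOf_sq_sub_eq_sq (s r : ℝ) :
    {t : ℝ | (t - s) ^ 2 = r ^ 2} = {s - |r|, s + |r|} := by
  ext t
  simp only [Set.mem_ofPred_eq, Set.mem_insert_iff, Set.mem_singleton_iff,
    sq_eq_sq_iff_abs_eq_abs, abs_eq (abs_nonneg r)]
  constructor <;> rintro (h | h) <;> first | (left; linarith) | (right; linarith)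

theorem setOf_sq_sub_eq_sq_linear (t v c : ℝ) (hv : 1 + v ≠ 0) (hv' : 1 - v ≠ 0) :
    {s : ℝ | (s - t) ^ 2 = (v * s + c) ^ 2} = {(t - c) / (1 + v), (t + c) / (1 - v)} := by
  ext s
  simp only [Set.mem_ofPred_eq, Set.mem_insert_iff, Set.mem_singleton_iff,
    sq_eq_sq_iff_eq_or_eq_neg, eq_div_iff hv, eq_div_iff hv']
  constructor <;> rintro (h | h) <;> first | (left; linarith) | (right; linarith)

/-- Section 5 example of the paper: for the inertial clocks `γ(t) = (t,0,0,0)` and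
`γ̃(s) = (s, v s + c, 0, 0)` with `0 < v < 1`, `c > 0`, the clock `γ̃` is Einstein
synchroneous to `γ` (the two light-ray parameters on `γ` through `γ̃(s)` are
`s ∓ |v s + c|`, with midpoint `s`), but `γ` is not Einstein synchroneous to `γ̃`
(the two parameters on `γ̃` through `γ(t)` are `(t-c)/(1+v)` and `(t+c)/(1-v)`, with
midpoint `(t + v c)/(1 - v²) ≠ t` for `t = 0`): Einstein synchroneity is not a
symmetric relation. -/
theorem einstein_synchroneity_not_symmetric
    (v c : ℝ) (hv0 : 0 < v) (hv1 : v < 1) (hc : c > 0)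
    (γ γt : ℝ → Fin 4 → ℝ)
    (hγ : ∀ t : ℝ, γ t = ![t, 0, 0, 0])
    (hγt : ∀ s : ℝ, γt s = ![s, v * s + c, 0, 0]) :
    (∀ s : ℝ, v * s + c ≠ 0 →
      {t : ℝ | minkQ (γ t - γt s) = 0} = {s - |v * s + c|, s + |v * s + c|} ∧
      ((s - |v * s + c|) + (s + |v * s + c|)) / 2 = s) ∧
    (∀ t : ℝ,
      {s : ℝ | minkQ (γt s - γ t) = 0} = {(t - c) / (1 + v), (t + c) / (1 - v)} ∧
      ((t - c) / (1 + v) + (t + c) / (1 - v)) / 2 = (t + v * c) / (1 - v ^ 2)) ∧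
    ((0 : ℝ) + v * c) / (1 - v ^ 2) ≠ 0 := by
  have hplus : 1 + v ≠ 0 := by linarith
  have hminus : 1 - v ≠ 0 := by linarith
  have hsq : 1 - v ^ 2 ≠ 0 := by nlinarith
  refine ⟨fun s _ => ⟨?_, by ring⟩, fun t => ⟨?_, ?_⟩, ?_⟩
  · simp only [hγ, hγt, minkQ_sub_eq_zero_iff, zero_sub, neg_sq]
    exact setOf_sq_sub_eq_sq s _
  · simp only [hγ, hγt, minkQ_sub_eq_zero_iff, sub_zero]
    exact setOf_sq_sub_eq_sq_linear t v c hplus hminus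
  · field_simp
    ring
  · rw [zero_add]
    exact div_ne_zero (mul_pos hv0 hc).ne' hsq
end

section
/- Model Minkowski spacetime as ℝ⁴ with quadratic form Q(v) = −v₀² + v₁² + v₂² + v₃². Let I ⊆ ℝ be an open interval and γ : I → ℝ⁴ a smooth injective curve with Q(γ'(t)) < 0 and γ'(t)₀ > 0 for all t ∈ I (a clock), and let t₀ ∈ I. Then there exist open sets U and V of ℝ⁴ with γ(t₀) ∈ U ⊆ V such that for every q ∈ U not on the image of γ: there is exactly one t ∈ I with Q(q − γ(t)) = 0, (q − γ(t))₀ > 0, and the segment {(1 − λ)·γ(t) + λ·q : λ ∈ [0,1]} contained in V; and there is exactly one t' ∈ I with Q(γ(t') − q) = 0, (γ(t') − q)₀ > 0, and the segment {(1 − λ)·q + λ·γ(t') : λ ∈ [0,1]} contained in V. Such a U is a radar neighborhood of γ(t₀) with respect to γ. -/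
lemma minkQ_null_diff (u w : Fin 4 → ℝ) (hu : minkQ u = 0) (hw : minkQ w = 0)
    (hu0 : u 0 > 0) (hw0 : w 0 > 0) : 0 ≤ minkQ (u - w) := by
  simp only [minkQ, Pi.sub_apply] at *
  nlinarith [sq_nonneg (u 1 * w 2 - u 2 * w 1), sq_nonneg (u 1 * w 3 - u 3 * w 1),
    sq_nonneg (u 2 * w 3 - u 3 * w 2), mul_pos hu0 hw0,
    sq_nonneg (u 0 * w 0 - u 1 * w 1 - u 2 * w 2 - u 3 * w 3), sq_nonneg (u 0 - w 0)]

lemma minkQ_cont_sub_left (p : Fin 4 → ℝ) : Continuous fun q : Fin 4 → ℝ => minkQ (p - q) := by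
  unfold minkQ; fun_prop

lemma minkQ_cont_sub_right (p : Fin 4 → ℝ) : Continuous fun q : Fin 4 → ℝ => minkQ (q - p) := by
  unfold minkQ; fun_prop

lemma minkQ_neg (v : Fin 4 → ℝ) : minkQ (-v) = minkQ v := by
  simp only [minkQ, Pi.neg_apply]; ring

lemma minkQ_sub_comm (u v : Fin 4 → ℝ) : minkQ (u - v) = minkQ (v - u) := by
  rw [← minkQ_neg (u - v), neg_sub]

set_option maxHeartbeats 1600000 in
/-- Proposition 1 of the paper (existence of radar neighborhoods), stated for
Minkowski spacetime: for a clock `γ` (smooth injective curve on an open interval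
`I`, with timelike future-pointing tangent) and `t₀ ∈ I`, there are open sets
`U ⊆ V` with `γ(t₀) ∈ U` such that every event `q ∈ U` off the worldline is
connected to the worldline by exactly one future-pointing light ray from the
worldline to `q` and exactly one future-pointing light ray from `q` to the
worldline, with both light-ray segments contained in `V`. -/
theorem radar_neighborhood_exists
    (a b : ℝ) (I : Set ℝ) (hI : I = Set.Ioo a b)
    (γ : ℝ → Fin 4 → ℝ)
    (hsmooth : ContDiffOn ℝ (⊤ : ℕ∞) γ I)
    (hinj : Set.InjOn γ I)
    (htime : ∀ t ∈ I, minkQ (derivWithin γ I t) < 0)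
    (hfut : ∀ t ∈ I, derivWithin γ I t 0 > 0)
    (t₀ : ℝ) (ht₀ : t₀ ∈ I) :
    ∃ U V : Set (Fin 4 → ℝ), IsOpen U ∧ IsOpen V ∧ γ t₀ ∈ U ∧ U ⊆ V ∧
      ∀ q ∈ U, q ∉ γ '' I →
        (∃! t : ℝ, t ∈ I ∧ minkQ (q - γ t) = 0 ∧ (q - γ t) 0 > 0 ∧
          ∀ l ∈ Set.Icc (0 : ℝ) 1, (1 - l) • γ t + l • q ∈ V) ∧
        (∃! t' : ℝ, t' ∈ I ∧ minkQ (γ t' - q) = 0 ∧ (γ t' - q) 0 > 0 ∧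
          ∀ l ∈ Set.Icc (0 : ℝ) 1, (1 - l) • q + l • γ t' ∈ V) := by
  have hIo : IsOpen I := hI ▸ isOpen_Ioo
  have hIconv : Convex ℝ I := hI ▸ convex_Ioo a b
  set γd := derivWithin γ I with hγd
  have hcont : ContinuousOn γ I := hsmooth.continuousOn
  have hder : ∀ t ∈ I, HasDerivAt γ (γd t) t := by
    intro t ht
    have h1 : DifferentiableAt ℝ γ t :=
      ((hsmooth.differentiableOn (by simp)) t ht).differentiableAt (hIo.mem_nhds ht)
    have := h1.hasDerivAt
    rwa [← derivWithin_of_isOpen hIo ht] at this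
  have hdercont : ContinuousOn γd I :=
    hsmooth.continuousOn_derivWithin hIo.uniqueDiffOn (by simp)
  -- strict monotonicity of the time component
  have hmono : StrictMonoOn (fun t => γ t 0) I := by
    apply strictMonoOn_of_deriv_pos hIconv
      (show ContinuousOn (fun t => γ t 0) I from (continuous_apply 0).comp_continuousOn hcont)
    intro x hx
    rw [hIo.interior_eq] at hx
    rw [((hasDerivAt_pi.mp (hder x hx)) 0).deriv]
    exact hfut x hx
  -- choose ε
  set c := γd t₀ with hc_def
  have hc : minkQ c < 0 := htime t₀ ht₀
  have hc0 : c 0 > 0 := hfut t₀ ht₀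
  obtain ⟨ε, hε, hεc0, hεF⟩ : ∃ ε > 0, ε < c 0 ∧
      -(c 0 - ε)^2 + (|c 1| + ε)^2 + (|c 2| + ε)^2 + (|c 3| + ε)^2 < 0 := by
    have hFc : Continuous fun e : ℝ =>
        -(c 0 - e)^2 + (|c 1| + e)^2 + (|c 2| + e)^2 + (|c 3| + e)^2 := by fun_prop
    have hO : IsOpen ({e : ℝ | -(c 0 - e)^2 + (|c 1| + e)^2 + (|c 2| + e)^2 + (|c 3| + e)^2 < 0}
        ∩ Set.Iio (c 0)) :=
      (isOpen_lt hFc continuous_const).inter isOpen_Iio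
    have h0 : (0:ℝ) ∈ ({e : ℝ | -(c 0 - e)^2 + (|c 1| + e)^2 + (|c 2| + e)^2 + (|c 3| + e)^2 < 0}
        ∩ Set.Iio (c 0)) := by
      constructor
      · show -(c 0 - 0)^2 + (|c 1| + 0)^2 + (|c 2| + 0)^2 + (|c 3| + 0)^2 < 0
        have h1 := sq_abs (c 1); have h2 := sq_abs (c 2); have h3 := sq_abs (c 3)
        simp only [minkQ] at hc
        nlinarith
      · exact hc0
    obtain ⟨r, hr, hball⟩ := Metric.isOpen_iff.mp hO 0 h0
    have hmem : (r/2) ∈ Metric.ball (0:ℝ) r := by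
      rw [Metric.mem_ball, Real.dist_eq, sub_zero, abs_of_pos (by linarith)]; linarith
    have h5 := hball hmem
    exact ⟨r/2, by linarith, h5.2, h5.1⟩
  -- choose δ
  obtain ⟨r, hr, hball⟩ : ∃ r > 0, Metric.ball t₀ r ⊆ {s | s ∈ I ∧ dist (γd s) c < ε} := by
    have h1 : {s | s ∈ I ∧ dist (γd s) c < ε} ∈ nhds t₀ := by
      have hca : ContinuousAt γd t₀ := hdercont.continuousAt (hIo.mem_nhds ht₀)
      have h2 : {s | dist (γd s) c < ε} ∈ nhds t₀ := by
        have := hca.preimage_mem_nhds (Metric.ball_mem_nhds c hε)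
        simpa [Metric.ball, dist_comm] using this
      exact Filter.inter_mem (hIo.mem_nhds ht₀) h2
    obtain ⟨r, hr, hb⟩ := Metric.mem_nhds_iff.mp h1
    exact ⟨r, hr, hb⟩
  set δ := r/2 with hδdef
  have hδ : 0 < δ := by positivity
  set K := Set.Icc (t₀ - δ) (t₀ + δ) with hK_def
  have hKball : K ⊆ Metric.ball t₀ r := by
    intro s hs
    simp only [Metric.mem_ball, Real.dist_eq]
    rw [abs_sub_lt_iff]
    constructor <;> (simp only [hK_def, Set.mem_Icc] at hs; linarith)
  have hKI : K ⊆ I := fun s hs => (hball (hKball hs)).1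
  have hKd : ∀ s ∈ K, ∀ i, |γd s i - c i| < ε := by
    intro s hs i
    have := (hball (hKball hs)).2
    have h2 := ((dist_pi_lt_iff hε).mp this) i
    rwa [Real.dist_eq] at h2
  clear_value γd c δ K
  -- chord lemma: chords within K are future-pointing timelike
  have chord : ∀ t t', t ∈ K → t' ∈ K → t < t' →
      minkQ (γ t' - γ t) < 0 ∧ (γ t' - γ t) 0 > 0 := by
    intro t t' ht ht' htt
    rw [hK_def, Set.mem_Icc] at ht ht'
    have hsub : Set.Icc t t' ⊆ K := by rw [hK_def]; exact Set.Icc_subset_Icc ht.1 ht'.2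
    have hIcc : Set.Icc t t' ⊆ I := fun x hx => hKI (hsub hx)
    have mvt : ∀ i : Fin 4, ∃ ξ ∈ Set.Ioo t t', γ t' i - γ t i = γd ξ i * (t' - t) := by
      intro i
      obtain ⟨ξ, hξ, he⟩ := exists_hasDerivAt_eq_slope (fun s => γ s i) (fun s => γd s i) htt
        (((continuous_apply i).comp_continuousOn hcont).mono hIcc)
        (fun x hx => (hasDerivAt_pi.mp (hder x (hIcc (Set.Ioo_subset_Icc_self hx)))) i)
      refine ⟨ξ, hξ, ?_⟩
      rw [eq_div_iff (by linarith : t' - t ≠ 0)] at he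
      linarith [he]
    obtain ⟨ξ0, hξ0, e0⟩ := mvt 0
    obtain ⟨ξ1, hξ1, e1⟩ := mvt 1
    obtain ⟨ξ2, hξ2, e2⟩ := mvt 2
    obtain ⟨ξ3, hξ3, e3⟩ := mvt 3
    have b0 := hKd ξ0 (hsub (Set.Ioo_subset_Icc_self hξ0)) 0
    have b1 := hKd ξ1 (hsub (Set.Ioo_subset_Icc_self hξ1)) 1
    have b2 := hKd ξ2 (hsub (Set.Ioo_subset_Icc_self hξ2)) 2
    have b3 := hKd ξ3 (hsub (Set.Ioo_subset_Icc_self hξ3)) 3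
    have hA : c 0 - ε < γd ξ0 0 := by have := (abs_lt.mp b0).1; linarith
    have hc0ε : (0:ℝ) < c 0 - ε := by linarith
    have hB : ∀ (x ci : ℝ), |x - ci| < ε → x^2 < (|ci| + ε)^2 := by
      intro x ci hx
      have h1 := abs_sub_abs_le_abs_sub x ci
      have h2 := le_abs_self x
      have h3 := neg_abs_le x
      have h4 := abs_nonneg ci
      nlinarith [abs_nonneg x]
    have hB1 := hB _ _ b1
    have hB2 := hB _ _ b2
    have hB3 := hB _ _ b3
    have hA2 : (c 0 - ε)^2 < (γd ξ0 0)^2 := by nlinarith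
    have key : -(γd ξ0 0)^2 + (γd ξ1 1)^2 + (γd ξ2 2)^2 + (γd ξ3 3)^2 < 0 := by
      linarith
    have hh : (0:ℝ) < t' - t := by linarith
    have hfin : (t'-t)^2 * (-(γd ξ0 0)^2 + (γd ξ1 1)^2 + (γd ξ2 2)^2 + (γd ξ3 3)^2) < 0 :=
      mul_neg_of_pos_of_neg (by positivity) key
    constructor
    · simp only [minkQ, Pi.sub_apply]
      rw [e0, e1, e2, e3]
      have hgoal : -(γd ξ0 0 * (t'-t))^2 + (γd ξ1 1 * (t'-t))^2 + (γd ξ2 2 * (t'-t))^2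
          + (γd ξ3 3 * (t'-t))^2
          = (t'-t)^2 * (-(γd ξ0 0)^2 + (γd ξ1 1)^2 + (γd ξ2 2)^2 + (γd ξ3 3)^2) := by ring
      rw [hgoal]
      exact hfin
    · simp only [Pi.sub_apply]
      rw [e0]
      exact mul_pos (by linarith) hh
  -- set up the neighborhoods
  set t₁ := t₀ - δ/2 with ht₁def
  set t₂ := t₀ + δ/2 with ht₂def
  clear_value t₁ t₂
  have hmem_lo : t₀ - δ ∈ K := by rw [hK_def]; exact Set.mem_Icc.mpr ⟨by linarith, by linarith⟩
  have hmem_hi : t₀ + δ ∈ K := by rw [hK_def]; exact Set.mem_Icc.mpr ⟨by linarith, by linarith⟩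
  have hmem_t0 : t₀ ∈ K := by rw [hK_def]; exact Set.mem_Icc.mpr ⟨by linarith, by linarith⟩
  have hmem_t1 : t₁ ∈ K := by rw [hK_def]; exact Set.mem_Icc.mpr ⟨by linarith, by linarith⟩
  have hmem_t2 : t₂ ∈ K := by rw [hK_def]; exact Set.mem_Icc.mpr ⟨by linarith, by linarith⟩
  have hsub12 : Set.Icc t₁ t₂ ⊆ K := by rw [hK_def]; exact Set.Icc_subset_Icc (by linarith) (by linarith)
  set lo := γ (t₀ - δ) 0 with hlodef
  set hi := γ (t₀ + δ) 0 with hhidef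
  clear_value lo hi
  have hmono' : ∀ s ∈ I, ∀ u ∈ I, s < u → γ s 0 < γ u 0 := fun s hs u hu h => hmono hs hu h
  set V : Set (Fin 4 → ℝ) := (fun v : Fin 4 → ℝ => v 0) ⁻¹' Set.Ioo lo hi with hVdef
  have hVopen : IsOpen V := IsOpen.preimage (continuous_apply 0) isOpen_Ioo
  set U : Set (Fin 4 → ℝ) := V ∩ ({q | minkQ (q - γ t₁) < 0 ∧ 0 < q 0 - γ t₁ 0} ∩
      {q | minkQ (γ t₂ - q) < 0 ∧ 0 < γ t₂ 0 - q 0}) with hUdef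
  have hUopen : IsOpen U := by
    apply hVopen.inter
    apply IsOpen.inter
    · exact IsOpen.and (isOpen_lt (minkQ_cont_sub_right (γ t₁)) continuous_const)
        (isOpen_lt continuous_const ((continuous_apply 0).sub continuous_const))
    · exact IsOpen.and (isOpen_lt (minkQ_cont_sub_left (γ t₂)) continuous_const)
        (isOpen_lt continuous_const (continuous_const.sub (continuous_apply 0)))
  -- membership of γ t₀ in U
  have hγt₀U : γ t₀ ∈ U := by
    refine ⟨⟨?_, ?_⟩, ⟨?_, ?_⟩, ⟨?_, ?_⟩⟩
    · rw [hlodef]; exact hmono' _ (hKI hmem_lo) _ (hKI hmem_t0) (by linarith)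
    · rw [hhidef]; exact hmono' _ (hKI hmem_t0) _ (hKI hmem_hi) (by linarith)
    · exact (chord t₁ t₀ hmem_t1 hmem_t0 (by linarith)).1
    · have := (chord t₁ t₀ hmem_t1 hmem_t0 (by linarith)).2
      simpa [Pi.sub_apply] using this
    · exact (chord t₀ t₂ hmem_t0 hmem_t2 (by linarith)).1
    · have := (chord t₀ t₂ hmem_t0 hmem_t2 (by linarith)).2
      simpa [Pi.sub_apply] using this
  -- confinement: points of the curve in V have parameter near t₀
  have hconf : ∀ t ∈ I, γ t ∈ V → t ∈ K := by
    intro t ht hv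
    have hv' : γ t 0 ∈ Set.Ioo lo hi := hv
    rw [hK_def, Set.mem_Icc]
    constructor
    · by_contra h
      push_neg at h
      rcases lt_or_eq_of_le h.le with h2 | h2
      · have h3 := hmono' _ ht _ (hKI hmem_lo) h2
        have h4 := hv'.1
        rw [hlodef] at h4
        linarith
      · have h4 := hv'.1
        rw [hlodef, ← h2] at h4
        linarith
    · by_contra h
      push_neg at h
      rcases lt_or_eq_of_le h.le with h2 | h2
      · have h3 := hmono' _ (hKI hmem_hi) _ ht h2
        have h4 := hv'.2
        rw [hhidef] at h4
        linarith
      · have h4 := hv'.2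
        rw [hhidef, ← h2] at h4
        linarith
  -- V is convex along segments
  have hseg : ∀ x, x ∈ V → ∀ y, y ∈ V → ∀ l ∈ Set.Icc (0:ℝ) 1, (1 - l) • x + l • y ∈ V := by
    intro x hx y hy l hl
    have hx' : x 0 ∈ Set.Ioo lo hi := hx
    have hy' : y 0 ∈ Set.Ioo lo hi := hy
    show ((1 - l) • x + l • y) 0 ∈ Set.Ioo lo hi
    have heval : ((1 - l) • x + l • y) 0 = (1 - l) • (x 0) + l • (y 0) := by
      simp [Pi.add_apply, Pi.smul_apply]
    rw [heval]
    exact (convex_Ioo lo hi) hx' hy' (by linarith [hl.2]) hl.1 (by ring)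
  refine ⟨U, V, hUopen, hVopen, hγt₀U, Set.inter_subset_left, ?_⟩
  intro q hq hqoff
  obtain ⟨hqV, hq1, hq2⟩ := hq
  -- continuity of the key functions at points of I
  have hfat : ∀ τ ∈ I, ContinuousAt (fun t => minkQ (q - γ t)) τ := fun τ hτ =>
    (minkQ_cont_sub_left q).continuousAt.comp (hcont.continuousAt (hIo.mem_nhds hτ))
  have hgat : ∀ τ ∈ I, ContinuousAt (fun t => q 0 - γ t 0) τ := fun τ hτ =>
    continuousAt_const.sub (((continuous_apply 0).continuousAt).comp
      (hcont.continuousAt (hIo.mem_nhds hτ)))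
  -- pairwise exclusion lemmas
  have hkey : ∀ y z, y ∈ K → z ∈ K → y < z → minkQ (q - γ y) = 0 → minkQ (q - γ z) = 0 →
      0 < q 0 - γ y 0 → 0 < q 0 - γ z 0 → False := by
    intro y z hyK hzK hyz hfy hfz hgy hgz
    have hch := (chord y z hyK hzK hyz).1
    have hnd := minkQ_null_diff (q - γ y) (q - γ z) hfy hfz
      (by simpa [Pi.sub_apply] using hgy) (by simpa [Pi.sub_apply] using hgz)
    have heq : (q - γ y) - (q - γ z) = γ z - γ y := by abel
    rw [heq] at hnd
    linarith
  have hkey' : ∀ y z, y ∈ K → z ∈ K → y < z → minkQ (q - γ y) = 0 → minkQ (q - γ z) = 0 →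
      0 < γ y 0 - q 0 → 0 < γ z 0 - q 0 → False := by
    intro y z hyK hzK hyz hfy hfz hgy hgz
    have hch := (chord y z hyK hzK hyz).1
    have hnd := minkQ_null_diff (γ z - q) (γ y - q)
      ((minkQ_sub_comm (γ z) q).trans hfz) ((minkQ_sub_comm (γ y) q).trans hfy)
      (by simpa [Pi.sub_apply] using hgz) (by simpa [Pi.sub_apply] using hgy)
    have heq : (γ z - q) - (γ y - q) = γ z - γ y := by abel
    rw [heq] at hnd
    linarith
  have hfcont : ContinuousOn (fun t => minkQ (q - γ t)) I :=
    fun t ht => (hfat t ht).continuousWithinAt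
  have hgcont : ContinuousOn (fun t => q 0 - γ t 0) I :=
    fun t ht => (hgat t ht).continuousWithinAt
  have hWopen : IsOpen ((I ∩ (fun t => minkQ (q - γ t)) ⁻¹' Set.Iio 0) ∩
      (I ∩ (fun t => q 0 - γ t 0) ⁻¹' Set.Ioi 0)) :=
    (hfcont.isOpen_inter_preimage hIo isOpen_Iio).inter
      (hgcont.isOpen_inter_preimage hIo isOpen_Ioi)
  have hW'open : IsOpen ((I ∩ (fun t => minkQ (q - γ t)) ⁻¹' Set.Iio 0) ∩
      (I ∩ (fun t => q 0 - γ t 0) ⁻¹' Set.Iio 0)) :=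
    (hfcont.isOpen_inter_preimage hIo isOpen_Iio).inter
      (hgcont.isOpen_inter_preimage hIo isOpen_Iio)
  -- the `q = γ t` exclusion
  have hexcl : ∀ τ ∈ I, minkQ (q - γ τ) ≤ 0 → q 0 - γ τ 0 = 0 → False := by
    intro τ hτI hfle h0
    have hq_eq : q = γ τ := by
      have hfle' := hfle
      simp only [minkQ, Pi.sub_apply] at hfle'
      have h1 : q 1 - γ τ 1 = 0 ∧ q 2 - γ τ 2 = 0 ∧ q 3 - γ τ 3 = 0 := by
        refine ⟨?_, ?_, ?_⟩ <;>
          nlinarith [sq_nonneg (q 1 - γ τ 1), sq_nonneg (q 2 - γ τ 2), sq_nonneg (q 3 - γ τ 3)]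
      funext i
      fin_cases i
      · show q 0 = γ τ 0; linarith
      · show q 1 = γ τ 1; linarith [h1.1]
      · show q 2 = γ τ 2; linarith [h1.2.1]
      · show q 3 = γ τ 3; linarith [h1.2.2]
    exact hqoff ⟨τ, hτI, hq_eq.symm⟩
  -- existence for direction 1 (light ray from worldline to q)
  have hExist1 : ∃ τ ∈ Set.Icc t₁ t₂, minkQ (q - γ τ) = 0 ∧ 0 < q 0 - γ τ 0 := by
    classical
    set S : Set ℝ := {t | t ∈ Set.Icc t₁ t₂ ∧ minkQ (q - γ t) < 0 ∧ 0 < q 0 - γ t 0} with hSdef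
    have hSmem : ∀ s, s ∈ S → s ∈ Set.Icc t₁ t₂ ∧ minkQ (q - γ s) < 0 ∧ 0 < q 0 - γ s 0 :=
      fun s hs => hs
    have hS1 : t₁ ∈ S := ⟨Set.left_mem_Icc.mpr (by linarith), hq1.1, hq1.2⟩
    have hSne : S.Nonempty := ⟨t₁, hS1⟩
    have hSbdd : BddAbove S := BddAbove.mono (fun x hx => (hSmem x hx).1) bddAbove_Icc
    set τ := sSup S with hτdef
    have hτIcc : τ ∈ Set.Icc t₁ t₂ :=
      ⟨le_csSup hSbdd hS1, csSup_le hSne (fun x hx => (hSmem x hx).1.2)⟩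
    have hτI : τ ∈ I := hKI (hsub12 hτIcc)
    have hτcl : τ ∈ closure S := (isLUB_csSup hSne hSbdd).mem_closure hSne
    haveI hne : (nhdsWithin τ S).NeBot := mem_closure_iff_nhdsWithin_neBot.mp hτcl
    have hfle : minkQ (q - γ τ) ≤ 0 := by
      apply le_of_tendsto (((hfat τ hτI).tendsto).mono_left (nhdsWithin_le_nhds : nhdsWithin τ S ≤ nhds τ))
      exact eventually_nhdsWithin_of_forall (fun s hs => le_of_lt (hSmem s hs).2.1)
    have hgle : 0 ≤ q 0 - γ τ 0 := by
      apply ge_of_tendsto (((hgat τ hτI).tendsto).mono_left (nhdsWithin_le_nhds : nhdsWithin τ S ≤ nhds τ))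
      exact eventually_nhdsWithin_of_forall (fun s hs => le_of_lt (hSmem s hs).2.2)
    have hτnotS : τ ∉ S := by
      intro hτS
      replace hτS := hSmem τ hτS
      have hτne : τ ≠ t₂ := by
        intro h
        have h1 := hτS.2.2
        rw [h] at h1
        linarith [hq2.2]
      have hτlt : τ < t₂ := lt_of_le_of_ne hτIcc.2 hτne
      obtain ⟨η, hη, hb⟩ := Metric.isOpen_iff.mp hWopen τ
        ⟨⟨hτI, hτS.2.1⟩, ⟨hτI, hτS.2.2⟩⟩
      set s := min (τ + η/2) ((τ + t₂)/2) with hsdef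
      have hsτ : τ < s := lt_min (by linarith) (by linarith)
      have hsb : s ∈ Metric.ball τ η := by
        rw [Metric.mem_ball, Real.dist_eq, abs_of_pos (by linarith)]
        calc s - τ ≤ (τ + η/2) - τ := by
              apply sub_le_sub_right; exact min_le_left _ _
          _ < η := by linarith
      have hsW := hb hsb
      have hsS : s ∈ S := by
        refine ⟨⟨by linarith [hτIcc.1], ?_⟩, hsW.1.2, hsW.2.2⟩
        calc s ≤ (τ + t₂)/2 := min_le_right _ _
          _ ≤ t₂ := by linarith
      have := le_csSup hSbdd hsS
      linarith
    have hnot : ¬ (minkQ (q - γ τ) < 0 ∧ 0 < q 0 - γ τ 0) := fun h => hτnotS ⟨hτIcc, h⟩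
    have hgpos : 0 < q 0 - γ τ 0 := by
      rcases eq_or_lt_of_le hgle with h2 | h2
      · exact absurd h2.symm (fun hh => hexcl τ hτI hfle hh)
      · exact h2
    have hf0 : minkQ (q - γ τ) = 0 := by
      rcases eq_or_lt_of_le hfle with h | h
      · exact h
      · exact absurd (And.intro h hgpos) hnot
    exact ⟨τ, hτIcc, hf0, hgpos⟩
  -- existence for direction 2 (light ray from q to worldline)
  have hExist2 : ∃ τ ∈ Set.Icc t₁ t₂, minkQ (q - γ τ) = 0 ∧ 0 < γ τ 0 - q 0 := by
    classical
    set S : Set ℝ := {t | t ∈ Set.Icc t₁ t₂ ∧ minkQ (q - γ t) < 0 ∧ 0 < γ t 0 - q 0} with hSdef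
    have hSmem : ∀ s, s ∈ S → s ∈ Set.Icc t₁ t₂ ∧ minkQ (q - γ s) < 0 ∧ 0 < γ s 0 - q 0 :=
      fun s hs => hs
    have hS2 : t₂ ∈ S := ⟨Set.right_mem_Icc.mpr (by linarith),
      by rw [minkQ_sub_comm]; exact hq2.1, hq2.2⟩
    have hSne : S.Nonempty := ⟨t₂, hS2⟩
    have hSbdd : BddBelow S := BddBelow.mono (fun x hx => (hSmem x hx).1) bddBelow_Icc
    set τ := sInf S with hτdef
    have hτIcc : τ ∈ Set.Icc t₁ t₂ :=
      ⟨le_csInf hSne (fun x hx => (hSmem x hx).1.1), csInf_le hSbdd hS2⟩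
    have hτI : τ ∈ I := hKI (hsub12 hτIcc)
    have hτcl : τ ∈ closure S := (isGLB_csInf hSne hSbdd).mem_closure hSne
    haveI hne : (nhdsWithin τ S).NeBot := mem_closure_iff_nhdsWithin_neBot.mp hτcl
    have hfle : minkQ (q - γ τ) ≤ 0 := by
      apply le_of_tendsto (((hfat τ hτI).tendsto).mono_left (nhdsWithin_le_nhds : nhdsWithin τ S ≤ nhds τ))
      exact eventually_nhdsWithin_of_forall (fun s hs => le_of_lt (hSmem s hs).2.1)
    have hgle : q 0 - γ τ 0 ≤ 0 := by
      apply le_of_tendsto (((hgat τ hτI).tendsto).mono_left (nhdsWithin_le_nhds : nhdsWithin τ S ≤ nhds τ))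
      exact eventually_nhdsWithin_of_forall (fun s hs => by
        have h9 := (hSmem s hs).2.2
        show q 0 - γ s 0 ≤ 0
        linarith)
    have hτnotS : τ ∉ S := by
      intro hτS
      replace hτS := hSmem τ hτS
      have hτne : τ ≠ t₁ := by
        intro h
        have h1 := hτS.2.2
        rw [h] at h1
        linarith [hq1.2]
      have hτgt : t₁ < τ := lt_of_le_of_ne hτIcc.1 (Ne.symm hτne)
      obtain ⟨η, hη, hb⟩ := Metric.isOpen_iff.mp hW'open τ
        ⟨⟨hτI, hτS.2.1⟩, ⟨hτI, by show q 0 - γ τ 0 < 0; linarith [hτS.2.2]⟩⟩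
      set s := max (τ - η/2) ((t₁ + τ)/2) with hsdef
      have hsτ : s < τ := max_lt (by linarith) (by linarith)
      have hsb : s ∈ Metric.ball τ η := by
        rw [Metric.mem_ball, Real.dist_eq, abs_of_neg (by linarith), neg_sub]
        calc τ - s ≤ τ - (τ - η/2) := by
              apply sub_le_sub_left; exact le_max_left _ _
          _ < η := by linarith
      have hsW := hb hsb
      have hsS : s ∈ S := by
        refine ⟨⟨?_, by linarith [hτIcc.2]⟩, hsW.1.2, by
          have := hsW.2.2; show 0 < γ s 0 - q 0
          simp only [Set.mem_preimage, Set.mem_Iio] at this; linarith⟩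
        calc t₁ ≤ (t₁ + τ)/2 := by linarith
          _ ≤ s := le_max_right _ _
      have := csInf_le hSbdd hsS
      linarith
    have hnot : ¬ (minkQ (q - γ τ) < 0 ∧ 0 < γ τ 0 - q 0) := fun h => hτnotS ⟨hτIcc, h⟩
    have hgpos : 0 < γ τ 0 - q 0 := by
      rcases eq_or_lt_of_le hgle with h2 | h2
      · exact absurd (by linarith : q 0 - γ τ 0 = 0) (fun hh => hexcl τ hτI hfle hh)
      · linarith
    have hf0 : minkQ (q - γ τ) = 0 := by
      rcases eq_or_lt_of_le hfle with h | h
      · exact h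
      · exact absurd (And.intro h hgpos) hnot
    exact ⟨τ, hτIcc, hf0, hgpos⟩
  obtain ⟨τ, hτIcc, hτf, hτg⟩ := hExist1
  obtain ⟨σ, hσIcc, hσf, hσg⟩ := hExist2
  have hτK : τ ∈ K := hsub12 hτIcc
  have hσK : σ ∈ K := hsub12 hσIcc
  have hτI : τ ∈ I := hKI hτK
  have hσI : σ ∈ I := hKI hσK
  have hγτV : γ τ ∈ V := by
    show γ τ 0 ∈ Set.Ioo lo hi
    constructor
    · rw [hlodef]; exact hmono' _ (hKI hmem_lo) _ hτI (by linarith [hτIcc.1])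
    · rw [hhidef]; exact hmono' _ hτI _ (hKI hmem_hi) (by linarith [hτIcc.2])
  have hγσV : γ σ ∈ V := by
    show γ σ 0 ∈ Set.Ioo lo hi
    constructor
    · rw [hlodef]; exact hmono' _ (hKI hmem_lo) _ hσI (by linarith [hσIcc.1])
    · rw [hhidef]; exact hmono' _ hσI _ (hKI hmem_hi) (by linarith [hσIcc.2])
  constructor
  · -- unique light ray from worldline to q
    refine ⟨τ, ⟨hτI, hτf, by simpa [Pi.sub_apply] using hτg,
      fun l hl => hseg (γ τ) hγτV q hqV l hl⟩, ?_⟩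
    intro y hy
    obtain ⟨hyI, hyf, hyg, hyseg⟩ := hy
    have hyV : γ y ∈ V := by
      have := hyseg 0 ⟨le_refl _, zero_le_one⟩
      simpa using this
    have hyK : y ∈ K := hconf y hyI hyV
    have hyg' : 0 < q 0 - γ y 0 := by simpa [Pi.sub_apply] using hyg
    rcases lt_trichotomy y τ with h | h | h
    · exact (hkey y τ hyK hτK h hyf hτf hyg' hτg).elim
    · exact h
    · exact (hkey τ y hτK hyK h hτf hyf hτg hyg').elim
  · -- unique light ray from q to worldline
    refine ⟨σ, ⟨hσI, by rw [minkQ_sub_comm]; exact hσf,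
      by simpa [Pi.sub_apply] using hσg,
      fun l hl => hseg q hqV (γ σ) hγσV l hl⟩, ?_⟩
    intro y hy
    obtain ⟨hyI, hyf, hyg, hyseg⟩ := hy
    have hyV : γ y ∈ V := by
      have := hyseg 1 ⟨zero_le_one, le_refl _⟩
      simpa using this
    have hyK : y ∈ K := hconf y hyI hyV
    have hyg' : 0 < γ y 0 - q 0 := by simpa [Pi.sub_apply] using hyg
    have hyf' : minkQ (q - γ y) = 0 := by rw [minkQ_sub_comm]; exact hyf
    rcases lt_trichotomy y σ with h | h | h
    · exact (hkey' y σ hyK hσK h hyf' hσf hyg' hσg).elim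
    · exact h
    · exact (hkey' σ y hσK hyK h hσf hyf' hσg hyg').elim
end
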